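/- arXiv:math/0112126 — 8 statements merged into one kernel-verified Lean document; each statement's English description precedes it below -/
import Mathlib

section
/- The 4×4 matrix R_h over a commutative ring satisfies the quantum Yang–Baxter equation R₁₂ R₁₃ R₂₃ = R₂₃ R₁₃ R₁₂, where R₁₂, R₁₃, R₂₃ are the 8×8 matrices obtained by letting R_h act on the indicated pair of tensor factors of a three-fold tensor product of a 2-dimensional space (with the identity on the remaining factor). -/
/-- Index map `(i,j) ∈ {1,2}×{1,2}` (0-based) to `Fin 4`, row-major:
`(1,1),(1,2),(2,1),(2,2)`. -/
def pairIdx : Fin 2 × Fin 2 → Fin 4 := fun p => ⟨2 * p.1.1 + p.2.1, by omega⟩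

/-- The 4×4 matrix `R_h = [[1,−h,h,h²],[0,1,0,−h],[0,0,1,h],[0,0,0,1]]`,
with rows and columns indexed by pairs in the order `(1,1),(1,2),(2,1),(2,2)`. -/
def Rh {A : Type*} [CommRing A] (h : A) :
    Matrix (Fin 2 × Fin 2) (Fin 2 × Fin 2) A :=
  Matrix.of fun p q =>
    (!![1, -h, h, h^2;
        0,  1, 0, -h;
        0,  0, 1, h;
        0,  0, 0, 1] : Matrix (Fin 4) (Fin 4) A) (pairIdx p) (pairIdx q)

/-- `(R₁₂)^{ijk}_{lmn} = R^{ij}_{lm} δ^k_n`. -/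
def R12 {A : Type*} [CommRing A] (R : Matrix (Fin 2 × Fin 2) (Fin 2 × Fin 2) A) :
    Matrix (Fin 2 × Fin 2 × Fin 2) (Fin 2 × Fin 2 × Fin 2) A :=
  Matrix.of fun p q => R (p.1, p.2.1) (q.1, q.2.1) * (if p.2.2 = q.2.2 then 1 else 0)

/-- `(R₂₃)^{ijk}_{lmn} = δ^i_l R^{jk}_{mn}`. -/
def R23 {A : Type*} [CommRing A] (R : Matrix (Fin 2 × Fin 2) (Fin 2 × Fin 2) A) :
    Matrix (Fin 2 × Fin 2 × Fin 2) (Fin 2 × Fin 2 × Fin 2) A :=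
  Matrix.of fun p q => (if p.1 = q.1 then 1 else 0) * R (p.2.1, p.2.2) (q.2.1, q.2.2)

/-- `(R₁₃)^{ijk}_{lmn} = R^{ik}_{ln} δ^j_m`. -/
def R13 {A : Type*} [CommRing A] (R : Matrix (Fin 2 × Fin 2) (Fin 2 × Fin 2) A) :
    Matrix (Fin 2 × Fin 2 × Fin 2) (Fin 2 × Fin 2 × Fin 2) A :=
  Matrix.of fun p q => R (p.1, p.2.2) (q.1, q.2.2) * (if p.2.1 = q.2.1 then 1 else 0)

set_option maxHeartbeats 4000000 in
/-- The matrix `R_h` satisfies the quantum Yang–Baxter equation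
`R₁₂ R₁₃ R₂₃ = R₂₃ R₁₃ R₁₂`. -/
theorem Rh_satisfies_QYBE {A : Type*} [CommRing A] (h : A) :
    R12 (Rh h) * R13 (Rh h) * R23 (Rh h) = R23 (Rh h) * R13 (Rh h) * R12 (Rh h) := by
  ext ⟨i, j, k⟩ ⟨l, m, n⟩
  fin_cases i <;> fin_cases j <;> fin_cases k <;> fin_cases l <;> fin_cases m <;> fin_cases n <;>
    simp [Matrix.mul_apply, Fintype.sum_prod_type, Fin.sum_univ_two, R12, R13, R23, Rh, pairIdx,
      Matrix.of_apply, Matrix.vecHead, Matrix.vecTail] <;> ring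
end

section
/- Let A be an associative algebra over a field k, let q ∈ k with q ≠ 0, and suppose α, β, γ, δ ∈ A satisfy the Gr_q(2) relations. Form the 2×2 matrix Â = [[α,β],[γ,δ]] over A, the 4×4 matrices Â₁ = Â ⊗ I₂ and Â₂ = I₂ ⊗ Â (Kronecker products with the 2×2 identity matrix), and the 4×4 scalar matrix R_q. Then R_q Â₁ Â₂ = − Â₂ Â₁ R_q. -/
open Kronecker

/-- The 4×4 matrix
`R_q = [[q+q⁻¹,0,0,0],[0,2,q⁻¹−q,0],[0,q−q⁻¹,2,0],[0,0,0,q+q⁻¹]]` over a field `k`. -/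
noncomputable def Rq {k : Type*} [Field k] (q : k) :
    Matrix (Fin 2 × Fin 2) (Fin 2 × Fin 2) k :=
  Matrix.of fun p r =>
    (!![q + q⁻¹, 0,       0,       0;
        0,       2,       q⁻¹ - q, 0;
        0,       q - q⁻¹, 2,       0;
        0,       0,       0,       q + q⁻¹] : Matrix (Fin 4) (Fin 4) k)
      (pairIdx p) (pairIdx r)

set_option maxHeartbeats 1000000 in
/-- If `α, β, γ, δ` satisfy the `Gr_q(2)` relations, then with
`Â = [[α,β],[γ,δ]]`, `Â₁ = Â ⊗ I₂`, `Â₂ = I₂ ⊗ Â` one has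
`R_q Â₁ Â₂ = − Â₂ Â₁ R_q`. -/
theorem Rq_relation_of_Grq {k A : Type*} [Field k] [Ring A] [Algebra k A]
    (q : k) (hq : q ≠ 0) (α β γ δ : A)
    (h1 : α * β + q⁻¹ • (β * α) = 0)
    (h2 : α * γ + q⁻¹ • (γ * α) = 0)
    (h3 : γ * δ + q⁻¹ • (δ * γ) = 0)
    (h4 : β * δ + q⁻¹ • (δ * β) = 0)
    (h5 : α * δ + δ * α = 0)
    (h6 : α * α = 0) (h7 : β * β = 0) (h8 : γ * γ = 0) (h9 : δ * δ = 0)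
    (h10 : β * γ + γ * β = (q - q⁻¹) • (δ * α)) :
    let Ahat : Matrix (Fin 2) (Fin 2) A := !![α, β; γ, δ]
    let A1 := Ahat ⊗ₖ (1 : Matrix (Fin 2) (Fin 2) A)
    let A2 := (1 : Matrix (Fin 2) (Fin 2) A) ⊗ₖ Ahat
    let R := (Rq q).map (algebraMap k A)
    R * A1 * A2 = -(A2 * A1 * R) := by
  intro Ahat A1 A2 R
  have hqq : q * q⁻¹ = 1 := mul_inv_cancel₀ hq
  have key : ∀ x y : A, x * y + q⁻¹ • (y * x) = 0 → y * x = -(q • (x * y)) := by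
    intro x y h
    have := congrArg (fun z => q • z) h
    simpa [smul_add, smul_smul, hqq, eq_neg_iff_add_eq_zero, add_comm] using this
  have hba := key _ _ h1
  have hga := key _ _ h2
  have hdg := key _ _ h3
  have hdb := key _ _ h4
  have hda : δ * α = -(α * δ) := by have := h5; rw [add_comm] at this; exact eq_neg_of_add_eq_zero_left this
  have hgb : γ * β = (q - q⁻¹) • (δ * α) - β * γ := by
    rw [← h10]; abel
  ext ⟨i, j⟩ ⟨i', j'⟩
  fin_cases i <;> fin_cases j <;> fin_cases i' <;> fin_cases j' <;>
    simp [Ahat, A1, A2, R, Rq, pairIdx, Matrix.mul_apply, Fintype.sum_prod_type,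
      Fin.sum_univ_two, Matrix.one_apply, Algebra.algebraMap_eq_smul_one, smul_smul]
  all_goals
    simp only [hba, hga, hdg, hdb, hda, hgb, h6, h7, h8, h9, smul_neg, smul_zero,
      neg_zero, smul_sub, smul_smul]
  all_goals try simp only [Matrix.vecHead, Matrix.vecTail, Function.comp, zero_smul, neg_zero]
  all_goals match_scalars <;> (try field_simp) <;> try ring
end

section
/- Let A be an associative algebra over a field k of characteristic zero, let q ∈ k with q ≠ 0 and q + q⁻¹ ≠ 0, and let α, β, γ, δ ∈ A. Form the 2×2 matrix Â = [[α,β],[γ,δ]] over A, the 4×4 matrices Â₁ = Â ⊗ I₂ and Â₂ = I₂ ⊗ Â (Kronecker products with the 2×2 identity matrix), and the 4×4 scalar matrix R_q. If R_q Â₁ Â₂ = − Â₂ Â₁ R_q, then α, β, γ, δ satisfy the Gr_q(2) relations. -/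
open Kronecker

private lemma cancel_smul {k A : Type*} [Field k] [AddCommGroup A] [Module k A]
    {c : k} (hc : c ≠ 0) {x : A} (h : c • x = 0) : x = 0 := by
  rcases smul_eq_zero.mp h with h' | h'
  · exact absurd h' hc
  · exact h'

/-- Over a field of characteristic zero, with `q ≠ 0` and `q + q⁻¹ ≠ 0`:
if `R_q Â₁ Â₂ = − Â₂ Â₁ R_q` (where `Â = [[α,β],[γ,δ]]`, `Â₁ = Â ⊗ I₂`,
`Â₂ = I₂ ⊗ Â`), then `α, β, γ, δ` satisfy the `Gr_q(2)` relations. -/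
theorem Grq_of_Rq_relation {k A : Type*} [Field k] [CharZero k] [Ring A] [Algebra k A]
    (q : k) (hq : q ≠ 0) (hq' : q + q⁻¹ ≠ 0) (α β γ δ : A)
    (hrel :
      let Ahat : Matrix (Fin 2) (Fin 2) A := !![α, β; γ, δ]
      let A1 := Ahat ⊗ₖ (1 : Matrix (Fin 2) (Fin 2) A)
      let A2 := (1 : Matrix (Fin 2) (Fin 2) A) ⊗ₖ Ahat
      let R := (Rq q).map (algebraMap k A)
      R * A1 * A2 = -(A2 * A1 * R)) :
    α * β + q⁻¹ • (β * α) = 0 ∧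
    α * γ + q⁻¹ • (γ * α) = 0 ∧
    γ * δ + q⁻¹ • (δ * γ) = 0 ∧
    β * δ + q⁻¹ • (δ * β) = 0 ∧
    α * δ + δ * α = 0 ∧
    α * α = 0 ∧ β * β = 0 ∧ γ * γ = 0 ∧ δ * δ = 0 ∧
    β * γ + γ * β = (q - q⁻¹) • (δ * α) := by
  have h2k : (2 : k) ≠ 0 := two_ne_zero
  have h2r : (2 : k) * (q + q⁻¹) ≠ 0 := mul_ne_zero h2k hq'
  simp only at hrel
  have key := Matrix.ext_iff.mpr hrel
  have h1 := key (0,0) (1,0)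
  have h2 := key (0,1) (0,0)
  have h3 := key (1,1) (1,0)
  have h4 := key (0,1) (1,1)
  have h5 := key (0,1) (0,1)
  have h6 := key (0,0) (0,0)
  have h7 := key (0,0) (1,1)
  have h8 := key (1,1) (0,0)
  have h9 := key (1,1) (1,1)
  have h10 := key (0,1) (1,0)
  clear key hrel
  simp [Matrix.mul_apply, Fintype.sum_prod_type, Fin.sum_univ_two, Rq, pairIdx,
    Matrix.one_apply, Matrix.vecHead, Matrix.vecTail, Algebra.algebraMap_eq_smul_one,
    smul_mul_assoc, mul_smul_comm] at h1 h2 h3 h4 h5 h6 h7 h8 h9 h10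
  refine ⟨?_, ?_, ?_, ?_, ?_, ?_, ?_, ?_, ?_, ?_⟩
  · refine cancel_smul h2k (x := α * β + q⁻¹ • (β * α)) ?_
    linear_combination (norm := module) h1
  · refine cancel_smul h2k (x := α * γ + q⁻¹ • (γ * α)) ?_
    linear_combination (norm := module) h2
  · refine cancel_smul h2k (x := γ * δ + q⁻¹ • (δ * γ)) ?_
    linear_combination (norm := module) h3
  · refine cancel_smul h2k (x := β * δ + q⁻¹ • (δ * β)) ?_
    linear_combination (norm := module) h4
  · refine cancel_smul h2k (x := α * δ + δ * α) ?_
    linear_combination (norm := module) h5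
  · refine cancel_smul h2r (x := α * α) ?_
    linear_combination (norm := module) h6
  · refine cancel_smul h2r (x := β * β) ?_
    linear_combination (norm := module) h7
  · refine cancel_smul h2r (x := γ * γ) ?_
    linear_combination (norm := module) h8
  · refine cancel_smul h2r (x := δ * δ) ?_
    linear_combination (norm := module) h9
  · rw [← sub_eq_zero]
    refine cancel_smul h2k (x := β * γ + γ * β - (q - q⁻¹) • (δ * α)) ?_
    linear_combination (norm := module) h10
end

section
/- Let A be an associative algebra over a field k, let h ∈ k, and suppose α, β, γ, δ ∈ A satisfy the Gr_h(2) relations. Let Â = [[α,β],[γ,δ]] and let Â_L⁻¹ = [[δ + hγ, β + hα],[−γ, −α]]. Then Â_L⁻¹ Â = Δ_L · I₂, where Δ_L = βγ + δα; that is, the matrix product Â_L⁻¹ Â equals the 2×2 matrix [[Δ_L, 0],[0, Δ_L]]. -/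
/-- If `α, β, γ, δ` satisfy the `Gr_h(2)` relations, then the left inverse
`Â_L⁻¹ = [[δ + hγ, β + hα],[−γ, −α]]` satisfies `Â_L⁻¹ Â = Δ_L · I₂` with
`Δ_L = βγ + δα`. -/
theorem left_inverse_Grh {k A : Type*} [Field k] [Ring A] [Algebra k A]
    (h : k) (α β γ δ : A)
    (h1 : α * β + β * α = h • (α * δ + β * γ))
    (h2 : α * γ + γ * α = 0)
    (h3 : β * γ + γ * β = h • (δ * γ - γ * α))
    (h4 : β * δ + δ * β = -(h • (α * δ + γ * β)))
    (h5 : α * δ + δ * α = h • (γ * α - δ * γ))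
    (h6 : γ * δ + δ * γ = 0)
    (h7 : α * α = -(h • (γ * α)))
    (h8 : β * β = h • (β * δ - α * β + h • (α * δ)))
    (h9 : γ * γ = 0)
    (h10 : δ * δ = h • (δ * γ)) :
    (!![δ + h • γ, β + h • α; -γ, -α] : Matrix (Fin 2) (Fin 2) A) * !![α, β; γ, δ] =
      !![β * γ + δ * α, 0; 0, β * γ + δ * α] := by
  have e2 : γ * α = -(α * γ) := by linear_combination (norm := noncomm_ring) h2
  have e4 : δ * β = -(β * δ) - h • (α * δ + γ * β) := by
    linear_combination (norm := noncomm_ring) h4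
  have e3 : γ * β = h • (δ * γ - γ * α) - β * γ := by
    linear_combination (norm := noncomm_ring) h3
  have e5 : α * δ = h • (γ * α - δ * γ) - δ * α := by
    linear_combination (norm := noncomm_ring) h5
  ext i j
  fin_cases i <;> fin_cases j <;>
    simp [Matrix.mul_apply, Fin.sum_univ_two, add_mul, smul_mul_assoc]
  · rw [e2]; module
  · rw [e4, e3, e2]; module
  · rw [e2]; module
  · rw [e3, e5, e2]; module
end

section
/- Let A be an associative algebra over a field k and q ∈ k with q ≠ 0. Suppose α, β, γ, δ ∈ A satisfy the Gr_q(2) relations, α', β', γ', δ' ∈ A also satisfy the Gr_q(2) relations, and every element of {α, β, γ, δ} anticommutes with every element of {α', β', γ', δ'} (i.e. uv + vu = 0 for u ∈ {α,β,γ,δ}, v ∈ {α',β',γ',δ'}). Define a = αα' + βγ', b = αβ' + βδ', c = γα' + δγ', d = γβ' + δδ' (the entries of the matrix product [[α,β],[γ,δ]]·[[α',β'],[γ',δ']]). Then ab = q·ba, ac = q·ca, and bc = cb. -/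
private lemma key_swap {A : Type*} [Ring A] (x y z w : A) (h : y * z = -(z * y)) :
    x * y * (z * w) = -(x * z * (y * w)) := by
  rw [mul_assoc x y (z * w), ← mul_assoc y z w, h]
  noncomm_ring

/-- If `α,β,γ,δ` and `α',β',γ',δ'` each satisfy the `Gr_q(2)` relations and
mutually anticommute, then the entries of the product matrix
`[[a,b],[c,d]] = [[α,β],[γ,δ]]·[[α',β'],[γ',δ']]` satisfy
`ab = q ba`, `ac = q ca`, `bc = cb`. -/
theorem product_of_Grq_in_GLq {k A : Type*} [Field k] [Ring A] [Algebra k A]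
    (q : k) (hq : q ≠ 0) (α β γ δ α' β' γ' δ' : A)
    -- Gr_q(2) relations for α, β, γ, δ
    (h1 : α * β + q⁻¹ • (β * α) = 0)
    (h2 : α * γ + q⁻¹ • (γ * α) = 0)
    (h3 : γ * δ + q⁻¹ • (δ * γ) = 0)
    (h4 : β * δ + q⁻¹ • (δ * β) = 0)
    (h5 : α * δ + δ * α = 0)
    (h6 : α * α = 0) (h7 : β * β = 0) (h8 : γ * γ = 0) (h9 : δ * δ = 0)
    (h10 : β * γ + γ * β = (q - q⁻¹) • (δ * α))
    -- Gr_q(2) relations for α', β', γ', δ'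
    (h1' : α' * β' + q⁻¹ • (β' * α') = 0)
    (h2' : α' * γ' + q⁻¹ • (γ' * α') = 0)
    (h3' : γ' * δ' + q⁻¹ • (δ' * γ') = 0)
    (h4' : β' * δ' + q⁻¹ • (δ' * β') = 0)
    (h5' : α' * δ' + δ' * α' = 0)
    (h6' : α' * α' = 0) (h7' : β' * β' = 0) (h8' : γ' * γ' = 0) (h9' : δ' * δ' = 0)
    (h10' : β' * γ' + γ' * β' = (q - q⁻¹) • (δ' * α'))
    -- mutual anticommutation
    (hanti : ∀ u ∈ ({α, β, γ, δ} : Set A), ∀ v ∈ ({α', β', γ', δ'} : Set A),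
      u * v + v * u = 0) :
    let a := α * α' + β * γ'
    let b := α * β' + β * δ'
    let c := γ * α' + δ * γ'
    let d := γ * β' + δ * δ'
    a * b = q • (b * a) ∧ a * c = q • (c * a) ∧ b * c = c * b := by
  intro a b c d
  have mem1 : α ∈ ({α, β, γ, δ} : Set A) := by simp
  have mem2 : β ∈ ({α, β, γ, δ} : Set A) := by simp
  have mem3 : γ ∈ ({α, β, γ, δ} : Set A) := by simp
  have mem4 : δ ∈ ({α, β, γ, δ} : Set A) := by simp
  have mem1' : α' ∈ ({α', β', γ', δ'} : Set A) := by simp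
  have mem2' : β' ∈ ({α', β', γ', δ'} : Set A) := by simp
  have mem3' : γ' ∈ ({α', β', γ', δ'} : Set A) := by simp
  have mem4' : δ' ∈ ({α', β', γ', δ'} : Set A) := by simp
  have s11 : α' * α = -(α * α') := eq_neg_of_add_eq_zero_right (hanti α mem1 α' mem1')
  have s12 : α' * β = -(β * α') := eq_neg_of_add_eq_zero_right (hanti β mem2 α' mem1')
  have s13 : α' * γ = -(γ * α') := eq_neg_of_add_eq_zero_right (hanti γ mem3 α' mem1')
  have s14 : α' * δ = -(δ * α') := eq_neg_of_add_eq_zero_right (hanti δ mem4 α' mem1')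
  have s21 : β' * α = -(α * β') := eq_neg_of_add_eq_zero_right (hanti α mem1 β' mem2')
  have s22 : β' * β = -(β * β') := eq_neg_of_add_eq_zero_right (hanti β mem2 β' mem2')
  have s23 : β' * γ = -(γ * β') := eq_neg_of_add_eq_zero_right (hanti γ mem3 β' mem2')
  have s24 : β' * δ = -(δ * β') := eq_neg_of_add_eq_zero_right (hanti δ mem4 β' mem2')
  have s31 : γ' * α = -(α * γ') := eq_neg_of_add_eq_zero_right (hanti α mem1 γ' mem3')
  have s32 : γ' * β = -(β * γ') := eq_neg_of_add_eq_zero_right (hanti β mem2 γ' mem3')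
  have s33 : γ' * γ = -(γ * γ') := eq_neg_of_add_eq_zero_right (hanti γ mem3 γ' mem3')
  have s34 : γ' * δ = -(δ * γ') := eq_neg_of_add_eq_zero_right (hanti δ mem4 γ' mem3')
  have s41 : δ' * α = -(α * δ') := eq_neg_of_add_eq_zero_right (hanti α mem1 δ' mem4')
  have s42 : δ' * β = -(β * δ') := eq_neg_of_add_eq_zero_right (hanti β mem2 δ' mem4')
  have s43 : δ' * γ = -(γ * δ') := eq_neg_of_add_eq_zero_right (hanti γ mem3 δ' mem4')
  have s44 : δ' * δ = -(δ * δ') := eq_neg_of_add_eq_zero_right (hanti δ mem4 δ' mem4')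
  have eαβ : α * β = -(q⁻¹ • (β * α)) := eq_neg_of_add_eq_zero_left h1
  have eαγ : α * γ = -(q⁻¹ • (γ * α)) := eq_neg_of_add_eq_zero_left h2
  have eγδ : γ * δ = -(q⁻¹ • (δ * γ)) := eq_neg_of_add_eq_zero_left h3
  have eβδ : β * δ = -(q⁻¹ • (δ * β)) := eq_neg_of_add_eq_zero_left h4
  have eαδ : α * δ = -(δ * α) := eq_neg_of_add_eq_zero_left h5
  have eβγ : β * γ = (q - q⁻¹) • (δ * α) - γ * β := eq_sub_of_add_eq h10
  have eαβ' : α' * β' = -(q⁻¹ • (β' * α')) := eq_neg_of_add_eq_zero_left h1'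
  have eαγ' : α' * γ' = -(q⁻¹ • (γ' * α')) := eq_neg_of_add_eq_zero_left h2'
  have eγδ' : γ' * δ' = -(q⁻¹ • (δ' * γ')) := eq_neg_of_add_eq_zero_left h3'
  have eβδ' : β' * δ' = -(q⁻¹ • (δ' * β')) := eq_neg_of_add_eq_zero_left h4'
  have eαδ' : α' * δ' = -(δ' * α') := eq_neg_of_add_eq_zero_left h5'
  have eγβ' : γ' * β' = (q - q⁻¹) • (δ' * α') - β' * γ' := eq_sub_of_add_eq' h10'
  refine ⟨?_, ?_, ?_⟩
  · show (α * α' + β * γ') * (α * β' + β * δ') = q • ((α * β' + β * δ') * (α * α' + β * γ'))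
    rw [add_mul, mul_add, mul_add, add_mul, mul_add, mul_add,
        key_swap α α' α β' s11, key_swap α α' β δ' s12,
        key_swap β γ' α β' s31, key_swap β γ' β δ' s32,
        key_swap α β' α α' s21, key_swap α β' β γ' s22,
        key_swap β δ' α α' s41, key_swap β δ' β γ' s42]
    simp only [h6, h7, zero_mul, neg_zero, zero_add, add_zero]
    rw [eαβ, eαδ', eγβ']
    simp only [neg_mul, mul_neg, neg_neg, smul_mul_assoc, mul_smul_comm, sub_mul, mul_sub, smul_smul, smul_sub, smul_neg]
    match_scalars <;> field_simp <;> ring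
  · show (α * α' + β * γ') * (γ * α' + δ * γ') = q • ((γ * α' + δ * γ') * (α * α' + β * γ'))
    rw [add_mul, mul_add, mul_add, add_mul, mul_add, mul_add,
        key_swap α α' γ α' s13, key_swap α α' δ γ' s14,
        key_swap β γ' γ α' s33, key_swap β γ' δ γ' s34,
        key_swap γ α' α α' s11, key_swap γ α' β γ' s12,
        key_swap δ γ' α α' s31, key_swap δ γ' β γ' s32]
    simp only [h6', h8', mul_zero, neg_zero, zero_add, add_zero]
    rw [eαδ, eβγ, eαγ']
    simp only [neg_mul, mul_neg, neg_neg, smul_mul_assoc, mul_smul_comm, sub_mul, mul_sub, smul_smul, smul_sub, smul_neg]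
    match_scalars <;> field_simp <;> ring
  · show (α * β' + β * δ') * (γ * α' + δ * γ') = (γ * α' + δ * γ') * (α * β' + β * δ')
    rw [add_mul, mul_add, mul_add, add_mul, mul_add, mul_add,
        key_swap α β' γ α' s23, key_swap α β' δ γ' s24,
        key_swap β δ' γ α' s43, key_swap β δ' δ γ' s44,
        key_swap γ α' α β' s11, key_swap γ α' β δ' s12,
        key_swap δ γ' α β' s31, key_swap δ γ' β δ' s32]
    rw [eαγ, eαδ, eβγ, eβδ, eαβ', eαδ', eγβ', eγδ']
    simp only [neg_mul, mul_neg, neg_neg, smul_mul_assoc, mul_smul_comm, sub_mul, mul_sub, smul_smul, smul_sub, smul_neg]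
    match_scalars <;> field_simp <;> ring
end

section
/- Let A be an associative algebra over a field k, let h ∈ k, and suppose: (i) α, β, γ, δ ∈ A satisfy the Gr_h(2) relations; (ii) x, y ∈ A satisfy the quantum h-plane relation xy = yx + h·y²; (iii) x and y each commute with each of α, β, γ, δ. Define η̄ = αx + βy and ξ̄ = γx + δy. Then η̄ and ξ̄ satisfy the dual quantum h-plane relations: ξ̄² = 0, η̄² = h·η̄ξ̄, and η̄ξ̄ + ξ̄η̄ = 0. -/
/-- If `α, β, γ, δ` satisfy the `Gr_h(2)` relations, `x, y` satisfy the quantum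
`h`-plane relation `xy = yx + h y²`, and `x, y` commute with `α, β, γ, δ`, then
`η̄ = αx + βy` and `ξ̄ = γx + δy` satisfy the dual quantum `h`-plane relations
`ξ̄² = 0`, `η̄² = h η̄ξ̄`, `η̄ξ̄ + ξ̄η̄ = 0`. -/
theorem dual_h_plane_of_action {k A : Type*} [Field k] [Ring A] [Algebra k A]
    (h : k) (α β γ δ x y : A)
    -- (i) Gr_h(2) relations
    (h1 : α * β + β * α = h • (α * δ + β * γ))
    (h2 : α * γ + γ * α = 0)
    (h3 : β * γ + γ * β = h • (δ * γ - γ * α))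
    (h4 : β * δ + δ * β = -(h • (α * δ + γ * β)))
    (h5 : α * δ + δ * α = h • (γ * α - δ * γ))
    (h6 : γ * δ + δ * γ = 0)
    (h7 : α * α = -(h • (γ * α)))
    (h8 : β * β = h • (β * δ - α * β + h • (α * δ)))
    (h9 : γ * γ = 0)
    (h10 : δ * δ = h • (δ * γ))
    -- (ii) quantum h-plane relation
    (hxy : x * y = y * x + h • (y * y))
    -- (iii) x and y commute with α, β, γ, δ
    (hcomm : ∀ u ∈ ({x, y} : Set A), ∀ v ∈ ({α, β, γ, δ} : Set A), u * v = v * u) :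
    let η := α * x + β * y
    let ξ := γ * x + δ * y
    ξ * ξ = 0 ∧ η * η = h • (η * ξ) ∧ η * ξ + ξ * η = 0 := by
  intro η ξ
  have cxa : x * α = α * x := hcomm x (by simp) α (by simp)
  have cxb : x * β = β * x := hcomm x (by simp) β (by simp)
  have cxg : x * γ = γ * x := hcomm x (by simp) γ (by simp)
  have cxd : x * δ = δ * x := hcomm x (by simp) δ (by simp)
  have cya : y * α = α * y := hcomm y (by simp) α (by simp)
  have cyb : y * β = β * y := hcomm y (by simp) β (by simp)
  have cyg : y * γ = γ * y := hcomm y (by simp) γ (by simp)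
  have cyd : y * δ = δ * y := hcomm y (by simp) δ (by simp)
  refine ⟨?_, ?_, ?_⟩
  · show (γ * x + δ * y) * (γ * x + δ * y) = 0
    linear_combination (norm := noncomm_ring [smul_add, smul_sub, smul_neg, smul_zero, neg_smul, smul_smul])
      γ * cxg * x + h9 * (x * x) + γ * cxd * y + δ * cyg * x + δ * cyd * y +
      γ * δ * hxy + h6 * (y * x) + h10 * (y * y) + h6 * (h • (y * y))
  · show (α * x + β * y) * (α * x + β * y) =
      h • ((α * x + β * y) * (γ * x + δ * y))
    linear_combination (norm := noncomm_ring [smul_add, smul_sub, smul_neg, smul_zero, neg_smul, smul_smul])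
      α * cxa * x + α * cxb * y + β * cya * x + β * cyb * y -
      h • (α * cxg * x) - h • (α * cxd * y) - h • (β * cyg * x) - h • (β * cyd * y) +
      h7 * (x * x) - h • (h2 * (x * x)) + α * β * hxy - h • (α * δ * hxy) +
      h1 * (y * x) + h8 * (y * y)
  · show (α * x + β * y) * (γ * x + δ * y) + (γ * x + δ * y) * (α * x + β * y) = 0
    linear_combination (norm := noncomm_ring [smul_add, smul_sub, smul_neg, smul_zero, neg_smul, smul_smul])
      α * cxg * x + α * cxd * y + β * cyg * x + β * cyd * y +
      γ * cxa * x + γ * cxb * y + δ * cya * x + δ * cyb * y +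
      (α * δ + γ * β) * hxy + h2 * (x * x) + h5 * (y * x) + h3 * (y * x) + h4 * (y * y)
end

section
/- Let A be an associative algebra over a field k, let h ∈ k, and suppose: (i) α, β, γ, δ ∈ A satisfy the Gr_h(2) relations; (ii) η, ξ ∈ A satisfy the dual quantum h-plane relations ξ² = 0, η² = h·ηξ, ηξ + ξη = 0; (iii) η and ξ each anticommute with each of α, β, γ, δ (uv + vu = 0 for u ∈ {η,ξ}, v ∈ {α,β,γ,δ}). Define x̄ = αη + βξ and ȳ = γη + δξ. Then x̄ and ȳ satisfy the quantum h-plane relation x̄ȳ = ȳx̄ + h·ȳ². -/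
/-- If `α, β, γ, δ` satisfy the `Gr_h(2)` relations, `η, ξ` satisfy the dual
quantum `h`-plane relations, and `η, ξ` anticommute with `α, β, γ, δ`, then
`x̄ = αη + βξ` and `ȳ = γη + δξ` satisfy the quantum `h`-plane relation
`x̄ȳ = ȳx̄ + h ȳ²`. -/
theorem h_plane_of_action_on_dual {k A : Type*} [Field k] [Ring A] [Algebra k A]
    (h : k) (α β γ δ η ξ : A)
    -- (i) Gr_h(2) relations
    (h1 : α * β + β * α = h • (α * δ + β * γ))
    (h2 : α * γ + γ * α = 0)
    (h3 : β * γ + γ * β = h • (δ * γ - γ * α))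
    (h4 : β * δ + δ * β = -(h • (α * δ + γ * β)))
    (h5 : α * δ + δ * α = h • (γ * α - δ * γ))
    (h6 : γ * δ + δ * γ = 0)
    (h7 : α * α = -(h • (γ * α)))
    (h8 : β * β = h • (β * δ - α * β + h • (α * δ)))
    (h9 : γ * γ = 0)
    (h10 : δ * δ = h • (δ * γ))
    -- (ii) dual quantum h-plane relations
    (hxi : ξ * ξ = 0) (heta : η * η = h • (η * ξ)) (hanti0 : η * ξ + ξ * η = 0)
    -- (iii) η and ξ anticommute with α, β, γ, δ
    (hanti : ∀ u ∈ ({η, ξ} : Set A), ∀ v ∈ ({α, β, γ, δ} : Set A),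
      u * v + v * u = 0) :
    let xb := α * η + β * ξ
    let yb := γ * η + δ * ξ
    xb * yb = yb * xb + h • (yb * yb) := by
  intro xb yb
  have swap : ∀ u v : A, u * v + v * u = 0 → u * v = -(v * u) := fun u v huv =>
    eq_neg_of_add_eq_zero_left huv
  have hηA : η ∈ ({η, ξ} : Set A) := by simp
  have hξA : ξ ∈ ({η, ξ} : Set A) := by simp
  have hαB : α ∈ ({α, β, γ, δ} : Set A) := by simp
  have hβB : β ∈ ({α, β, γ, δ} : Set A) := by simp
  have hγB : γ ∈ ({α, β, γ, δ} : Set A) := by simp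
  have hδB : δ ∈ ({α, β, γ, δ} : Set A) := by simp
  have e1 : η * α = -(α * η) := swap _ _ (hanti η hηA α hαB)
  have e2 : η * β = -(β * η) := swap _ _ (hanti η hηA β hβB)
  have e3 : η * γ = -(γ * η) := swap _ _ (hanti η hηA γ hγB)
  have e4 : η * δ = -(δ * η) := swap _ _ (hanti η hηA δ hδB)
  have f1 : ξ * α = -(α * ξ) := swap _ _ (hanti ξ hξA α hαB)
  have f2 : ξ * β = -(β * ξ) := swap _ _ (hanti ξ hξA β hβB)
  have f3 : ξ * γ = -(γ * ξ) := swap _ _ (hanti ξ hξA γ hγB)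
  have f4 : ξ * δ = -(δ * ξ) := swap _ _ (hanti ξ hξA δ hδB)
  have g0 : ξ * η = -(η * ξ) := eq_neg_of_add_eq_zero_right hanti0
  have key1 : xb * yb = (β * γ - α * δ - h • (α * γ)) * (η * ξ) := by
    show (α * η + β * ξ) * (γ * η + δ * ξ) = _
    calc (α * η + β * ξ) * (γ * η + δ * ξ)
        = α * (η * γ) * η + α * (η * δ) * ξ + β * (ξ * γ) * η + β * (ξ * δ) * ξ := by
          noncomm_ring
      _ = -(α * γ * (η * η)) - α * δ * (η * ξ) - β * γ * (ξ * η) - β * δ * (ξ * ξ) := by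
          rw [e3, e4, f3, f4]; noncomm_ring
      _ = (β * γ - α * δ - h • (α * γ)) * (η * ξ) := by
          rw [heta, g0, hxi]
          simp only [mul_smul_comm, smul_mul_assoc]
          noncomm_ring
  have key2 : yb * xb = (δ * α - γ * β - h • (γ * α)) * (η * ξ) := by
    show (γ * η + δ * ξ) * (α * η + β * ξ) = _
    calc (γ * η + δ * ξ) * (α * η + β * ξ)
        = γ * (η * α) * η + γ * (η * β) * ξ + δ * (ξ * α) * η + δ * (ξ * β) * ξ := by
          noncomm_ring
      _ = -(γ * α * (η * η)) - γ * β * (η * ξ) - δ * α * (ξ * η) - δ * β * (ξ * ξ) := by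
          rw [e1, e2, f1, f2]; noncomm_ring
      _ = (δ * α - γ * β - h • (γ * α)) * (η * ξ) := by
          rw [heta, g0, hxi]
          simp only [mul_smul_comm, smul_mul_assoc]
          noncomm_ring
  have key3 : yb * yb = (δ * γ - γ * δ) * (η * ξ) := by
    show (γ * η + δ * ξ) * (γ * η + δ * ξ) = _
    calc (γ * η + δ * ξ) * (γ * η + δ * ξ)
        = γ * (η * γ) * η + γ * (η * δ) * ξ + δ * (ξ * γ) * η + δ * (ξ * δ) * ξ := by
          noncomm_ring
      _ = -(γ * γ * (η * η)) - γ * δ * (η * ξ) - δ * γ * (ξ * η) - δ * δ * (ξ * ξ) := by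
          rw [e3, e4, f3, f4]; noncomm_ring
      _ = (δ * γ - γ * δ) * (η * ξ) := by
          rw [heta, g0, hxi, h9]
          simp only [zero_mul, mul_zero, smul_zero, neg_zero, zero_add, add_zero,
            mul_smul_comm, smul_mul_assoc]
          noncomm_ring
  have hs : h • ((δ * γ - γ * δ) * (η * ξ)) = (h • (δ * γ - γ * δ)) * (η * ξ) :=
    (smul_mul_assoc h _ _).symm
  rw [key1, key2, key3, hs, ← add_mul]
  congr 1
  have r2 : α * γ = -(γ * α) := eq_neg_of_add_eq_zero_left h2
  have r6 : γ * δ = -(δ * γ) := eq_neg_of_add_eq_zero_left h6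
  have r3 : β * γ = h • (δ * γ - γ * α) - γ * β := eq_sub_of_add_eq h3
  have r5 : α * δ = h • (γ * α - δ * γ) - δ * α := eq_sub_of_add_eq h5
  rw [r2, r6, r3, r5]
  module
end

section
/- Let A be an associative algebra over a field k, let q, h ∈ k with q ≠ 0 and q ≠ 1, and set f = h/(q−1). Let α, β, γ, δ ∈ A and define α' = α + fγ, β' = β + f(δ − α − fγ), γ' = γ, δ' = δ − fγ. If α', β', γ', δ' satisfy the Gr_q(2) relations, then the following exact identities hold: γ² = 0, αγ + q⁻¹γα = 0, γδ + q⁻¹δγ = 0, α² = −(h/q)·γα, and δ² = (h/q)·δγ. (As q → 1 these give the Gr_h(2) relations α² = −hγα, δ² = hδγ, αγ + γα = 0, γδ + δγ = 0, γ² = 0.) -/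
/-- Let `f = h/(q−1)`, `α' = α + fγ`, `β' = β + f(δ − α − fγ)`, `γ' = γ`,
`δ' = δ − fγ`. If `α', β', γ', δ'` satisfy the `Gr_q(2)` relations, then
`γ² = 0`, `αγ + q⁻¹γα = 0`, `γδ + q⁻¹δγ = 0`, `α² = −(h/q)γα`, `δ² = (h/q)δγ`. -/
theorem Grh_relations_from_Grq {k A : Type*} [Field k] [Ring A] [Algebra k A]
    (q h : k) (hq0 : q ≠ 0) (hq1 : q ≠ 1) (α β γ δ : A)
    (hrel :
      let f : k := h / (q - 1)
      let α' : A := α + f • γ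
      let β' : A := β + f • (δ - α - f • γ)
      let γ' : A := γ
      let δ' : A := δ - f • γ
      α' * β' + q⁻¹ • (β' * α') = 0 ∧
      α' * γ' + q⁻¹ • (γ' * α') = 0 ∧
      γ' * δ' + q⁻¹ • (δ' * γ') = 0 ∧
      β' * δ' + q⁻¹ • (δ' * β') = 0 ∧
      α' * δ' + δ' * α' = 0 ∧
      α' * α' = 0 ∧ β' * β' = 0 ∧ γ' * γ' = 0 ∧ δ' * δ' = 0 ∧
      β' * γ' + γ' * β' = (q - q⁻¹) • (δ' * α')) :
    γ * γ = 0 ∧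
    α * γ + q⁻¹ • (γ * α) = 0 ∧
    γ * δ + q⁻¹ • (δ * γ) = 0 ∧
    α * α = -((h / q) • (γ * α)) ∧
    δ * δ = (h / q) • (δ * γ) := by
  obtain ⟨h1, h2, h3, h4, h5, h6, h7, h8, h9, h10⟩ := hrel
  set f : k := h / (q - 1) with hf
  have G : γ * γ = 0 := h8
  have hq1' : q - 1 ≠ 0 := sub_ne_zero.mpr hq1
  have hs : f - f * q⁻¹ = h / q := by
    rw [hf]
    field_simp
  simp only [mul_add, add_mul, smul_mul_assoc, mul_smul_comm, smul_smul, G,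
    smul_zero, add_zero] at h2
  have AG : α * γ + q⁻¹ • (γ * α) = 0 := h2
  simp only [mul_sub, sub_mul, smul_mul_assoc, mul_smul_comm, smul_smul, G,
    smul_zero, sub_zero] at h3
  have GD : γ * δ + q⁻¹ • (δ * γ) = 0 := h3
  refine ⟨G, AG, GD, ?_, ?_⟩
  · have AG' : α * γ = -(q⁻¹ • (γ * α)) := by
      rw [eq_neg_iff_add_eq_zero]; exact AG
    simp only [mul_add, add_mul, smul_mul_assoc, mul_smul_comm, smul_smul, G, smul_zero,
      add_zero, AG', smul_neg] at h6
    rw [add_neg_eq_zero, ← eq_sub_iff_add_eq] at h6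
    rw [h6, ← sub_smul, ← neg_smul]
    congr 1
    rw [← hs]; ring
  · have GD' : γ * δ = -(q⁻¹ • (δ * γ)) := by
      rw [eq_neg_iff_add_eq_zero]; exact GD
    simp only [mul_sub, sub_mul, smul_mul_assoc, mul_smul_comm, smul_smul, G, smul_zero,
      sub_zero, GD', smul_neg, sub_neg_eq_add] at h9
    rw [sub_eq_zero, ← eq_sub_iff_add_eq] at h9
    rw [h9, ← sub_smul, hs]
end
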